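/- arXiv:2007.10408 — 2 statements merged into one kernel-verified Lean document; each statement's English description precedes it below -/
import Mathlib

section
/- Theorem 1, equation (e2): Let n ≥ 1, d ≥ 0. Let e : ℝⁿ × O(n) → ℝ be a feature map such that e(·, C) is d times continuously differentiable for every C ∈ O(n). Let ν be a measure on O(n) and, for each B ∈ O(n), let β_B be a family of coefficients defining a transformed differential operator χ_B^{(A)}. Define Φ[e](x, A) = ∫_{O(n)} χ_B^{(A)}[e(·, A B)](x) dν(B). Then for every orthogonal matrix Ã, every x ∈ ℝⁿ and every A ∈ O(n), Φ[π_Ã[e]](x, A) = Φ[e](Ã⁻¹x, Ã⁻¹A), where (π_Ã[e])(x, C) = e(Ã⁻¹x, Ã⁻¹C); i.e. Φ is equivariant under orthogonal transformations. -/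
/-- Action of an `n × n` real matrix on `ℝⁿ` (with the Euclidean norm) by
matrix-vector multiplication. -/
noncomputable def mact {n : ℕ} (A : Matrix (Fin n) (Fin n) ℝ) :
    EuclideanSpace ℝ (Fin n) →ₗ[ℝ] EuclideanSpace ℝ (Fin n) :=
  Matrix.toEuclideanLin A

/-- The list of direction vectors `A e₁` repeated `m 1` times, ..., `A eₙ` repeated
`m n` times, as a function on `Fin (∑ i, m i)` (block `i` consists of copies of `A eᵢ`). -/
noncomputable def dirs {n : ℕ} (A : Matrix (Fin n) (Fin n) ℝ) (m : Fin n → ℕ)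
    (j : Fin (∑ i, m i)) : EuclideanSpace ℝ (Fin n) :=
  (((List.finRange n).flatMap fun i =>
      List.replicate (m i) (mact A (EuclideanSpace.single i 1)))).getD j 0

/-- The transformed differential operator
`χ^{(A)}[r](x) = ∑_{|m| ≤ d} β_m · D^{|m|} r(x)[A e₁ repeated m₁ times, …, A eₙ repeated mₙ times]`,
where multi-indices `m ∈ ℕⁿ` with `|m| ≤ d` (hence each entry `≤ d`) are encoded as
functions `Fin n → Fin (d+1)`. -/
noncomputable def chi {n d : ℕ} (β : (Fin n → Fin (d+1)) → ℝ)
    (A : Matrix (Fin n) (Fin n) ℝ)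
    (r : EuclideanSpace ℝ (Fin n) → ℝ) (x : EuclideanSpace ℝ (Fin n)) : ℝ :=
  ∑ m : Fin n → Fin (d+1),
    if (∑ i, (m i : ℕ)) ≤ d then
      β m * iteratedFDeriv ℝ (∑ i, (m i : ℕ)) r x (dirs A fun i => (m i : ℕ))
    else 0

open MeasureTheory

/-- The orthogonal group `O(n)` is a (compact) topological group; we equip it with its
Borel σ-algebra so that measures `ν` on it make sense. -/
noncomputable instance {n : ℕ} : MeasurableSpace ↥(Matrix.orthogonalGroup (Fin n) ℝ) :=
  borel _

/-- The layer `Φ[e](x, A) = ∫_{O(n)} χ_B^{(A)}[e(·, A B)](x) dν(B)`, where for each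
`B ∈ O(n)` the coefficients `β B` define the transformed operator `χ_B^{(A)}`. -/
noncomputable def Phi {n d : ℕ}
    (β : Matrix.orthogonalGroup (Fin n) ℝ → (Fin n → Fin (d+1)) → ℝ)
    (ν : Measure (Matrix.orthogonalGroup (Fin n) ℝ))
    (e : EuclideanSpace ℝ (Fin n) → Matrix.orthogonalGroup (Fin n) ℝ → ℝ)
    (x : EuclideanSpace ℝ (Fin n)) (A : Matrix.orthogonalGroup (Fin n) ℝ) : ℝ :=
  ∫ B, chi (β B) (↑A) (fun y => e y (A * B)) x ∂ν

/-!
The chain rule for the linear map `Ã⁻¹` turns each iterated derivative of `e(Ã⁻¹ ·, Ã⁻¹ A B)` at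
`x` into the iterated derivative of `e(·, Ã⁻¹ A B)` at `Ã⁻¹ x` in the directions `Ã⁻¹ A eᵢ`, which
are the directions of the operator transformed by `Ã⁻¹ A`. Hence the integrands of both sides
agree for every `B`.
-/

lemma mact_mul {n : ℕ} (M N : Matrix (Fin n) (Fin n) ℝ) (v : EuclideanSpace ℝ (Fin n)) :
    mact (M * N) v = mact M (mact N v) := by
  simp [mact]

lemma dirs_mul {n : ℕ} (M A : Matrix (Fin n) (Fin n) ℝ) (m : Fin n → ℕ) :
    dirs (M * A) m = mact M ∘ dirs A m := by
  have hlist : ((List.finRange n).flatMap fun i =>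
        List.replicate (m i) (mact (M * A) (EuclideanSpace.single i 1))) =
      ((List.finRange n).flatMap fun i =>
        List.replicate (m i) (mact A (EuclideanSpace.single i 1))).map (mact M) := by
    simp only [List.map_flatMap, List.map_replicate, mact_mul]
  funext j
  rw [Function.comp_apply, dirs, dirs, hlist, ← List.getD_map (f := ⇑(mact M)), map_zero]

lemma chi_comp_mact {n d : ℕ} (β : (Fin n → Fin (d + 1)) → ℝ) (M A : Matrix (Fin n) (Fin n) ℝ)
    {r : EuclideanSpace ℝ (Fin n) → ℝ} (hr : ContDiff ℝ (d : ℕ∞) r) (x : EuclideanSpace ℝ (Fin n)) :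
    chi β A (fun y => r (mact M y)) x = chi β (M * A) r (mact M x) := by
  refine Finset.sum_congr rfl fun m _ => ?_
  split_ifs with hm
  · have hcomp := (mact M).toContinuousLinearMap.iteratedFDeriv_comp_right hr x
      (i := ∑ i, (m i : ℕ)) (by exact_mod_cast hm)
    simp only [Function.comp_def, LinearMap.coe_toContinuousLinearMap'] at hcomp
    rw [hcomp, ContinuousMultilinearMap.compContinuousLinearMap_apply, dirs_mul]
    rfl
  · rfl

theorem Phi_orthogonal_equivariance_general {n d : ℕ}
    (e : EuclideanSpace ℝ (Fin n) → Matrix.orthogonalGroup (Fin n) ℝ → ℝ)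
    (he : ∀ C, ContDiff ℝ (d : ℕ∞) (fun x => e x C))
    (β : Matrix.orthogonalGroup (Fin n) ℝ → (Fin n → Fin (d+1)) → ℝ)
    (ν : Measure (Matrix.orthogonalGroup (Fin n) ℝ))
    (Atil : Matrix.orthogonalGroup (Fin n) ℝ)
    (x : EuclideanSpace ℝ (Fin n)) (A : Matrix.orthogonalGroup (Fin n) ℝ) :
    Phi β ν (fun y C => e (mact (↑(Atil⁻¹)) y) (Atil⁻¹ * C)) x A
      = Phi β ν e (mact (↑(Atil⁻¹)) x) (Atil⁻¹ * A) := by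
  refine integral_congr_ae (ae_of_all _ fun B => ?_)
  simp only [← mul_assoc]
  exact chi_comp_mact (β B) (↑(Atil⁻¹)) A (he (Atil⁻¹ * A * B)) x

/-- Theorem 1, equation (e2): for a feature map `e : ℝⁿ × O(n) → ℝ`
with `e(·, C)` `d` times continuously differentiable for every `C`, the layer `Φ`
satisfies `Φ[π_Ã[e]](x, A) = Φ[e](Ã⁻¹x, Ã⁻¹A)`, where
`(π_Ã[e])(x, C) = e(Ã⁻¹x, Ã⁻¹C)`. -/
theorem Phi_orthogonal_equivariance {n d : ℕ} (hn : 1 ≤ n)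
    (e : EuclideanSpace ℝ (Fin n) → Matrix.orthogonalGroup (Fin n) ℝ → ℝ)
    (he : ∀ C, ContDiff ℝ (d : ℕ∞) (fun x => e x C))
    (β : Matrix.orthogonalGroup (Fin n) ℝ → (Fin n → Fin (d+1)) → ℝ)
    (ν : Measure (Matrix.orthogonalGroup (Fin n) ℝ))
    (Atil : Matrix.orthogonalGroup (Fin n) ℝ)
    (x : EuclideanSpace ℝ (Fin n)) (A : Matrix.orthogonalGroup (Fin n) ℝ) :
    Phi β ν (fun y C => e (mact (↑(Atil⁻¹)) y) (Atil⁻¹ * C)) x A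
      = Phi β ν e (mact (↑(Atil⁻¹)) x) (Atil⁻¹ * A) :=
  Phi_orthogonal_equivariance_general e he β ν Atil x A
end

section
/- Quadratic precision of the 5×5 stencil ũ_xxxy: There exists an absolute constant C > 0 such that the following holds. Let r : ℝ² → ℝ be six times continuously differentiable with ‖D⁶r(z)‖ ≤ M (operator norm of the sixth iterated Fréchet derivative) for all z ∈ ℝ². Then for every (x, y) ∈ ℝ² and every h > 0, |(1/(2h⁴))·[(−(1/2)r(x−2h, y+h) + r(x−h, y+h) − r(x+h, y+h) + (1/2)r(x+2h, y+h)) − (−(1/2)r(x−2h, y−h) + r(x−h, y−h) − r(x+h, y−h) + (1/2)r(x+2h, y−h))] − ∂⁴r/∂x³∂y(x, y)| ≤ C·M·h². -/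
/-!
The stencil is the odd four-point stencil `(-1/2, 1, -1, 1/2)` in `x` applied to the centered
difference `a ↦ r(x+a, y+h) - r(x+a, y-h)`. Taylor expansion in `y` to order five turns the
centered difference into `2h ∂_y r + (h³/3) ∂_y³ r + (h⁵/60) ∂_y⁵ r` up to `O(M h⁶)`. The
`x`-stencil kills `1, t, t², t⁴` and sends `t³` to `6h³`, so Taylor expansion in `x` leaves
`2h⁴ ∂⁴r/∂x³∂y` up to `O(M h⁶)`; dividing by `2h⁴` gives `O(M h²)`.

All derivatives are taken as one-variable derivatives of `t ↦ Dʲr(p + t•u)(v,…,v)`, which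
produce the Fréchet derivative evaluated at `(u,…,u,v,…,v)` in exactly the order of the target
`D⁴r(z)(e₁,e₁,e₁,e₂)`, so no symmetry of higher derivatives is needed.
-/

/-- The point `(a, b)` of the Euclidean plane `ℝ²`. -/
noncomputable def pt2 (a b : ℝ) : EuclideanSpace ℝ (Fin 2) := WithLp.toLp 2 ![a, b]

/-- The first standard basis vector `e₁` of `ℝ²`. -/
noncomputable def e1 : EuclideanSpace ℝ (Fin 2) := EuclideanSpace.single 0 1

/-- The second standard basis vector `e₂` of `ℝ²`. -/
noncomputable def e2 : EuclideanSpace ℝ (Fin 2) := EuclideanSpace.single 1 1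

open Finset Set
open scoped Nat

section Line

variable {E F : Type*} [NormedAddCommGroup E] [NormedSpace ℝ E]
  [NormedAddCommGroup F] [NormedSpace ℝ F] {f : E → F} {N : WithTop ℕ∞}

theorem hasDerivAt_iteratedFDeriv_line (hf : ContDiff ℝ N f) {j : ℕ} (hj : (j : WithTop ℕ∞) < N)
    (m : Fin j → E) (p v : E) (t : ℝ) :
    HasDerivAt (fun s : ℝ => iteratedFDeriv ℝ j f (p + s • v) m)
      (iteratedFDeriv ℝ (j + 1) f (p + t • v) (Fin.cons v m)) t := by
  have hline : HasDerivAt (fun s : ℝ => p + s • v) v t := by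
    simpa using ((hasDerivAt_id t).smul_const v).const_add p
  rw [iteratedFDeriv_succ_apply_left]
  exact (ContinuousMultilinearMap.apply ℝ (fun _ : Fin j => E) F m).hasFDerivAt.comp_hasDerivAt t
    ((hf.differentiable_iteratedFDeriv hj _).hasFDerivAt.comp_hasDerivAt t hline)

theorem deriv_iteratedFDeriv_line (hf : ContDiff ℝ N f) {j : ℕ} (hj : (j : WithTop ℕ∞) < N)
    (m : Fin j → E) (p v : E) :
    deriv (fun s : ℝ => iteratedFDeriv ℝ j f (p + s • v) m)
      = fun t => iteratedFDeriv ℝ (j + 1) f (p + t • v) (Fin.cons v m) :=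
  funext fun t => (hasDerivAt_iteratedFDeriv_line hf hj m p v t).deriv

theorem contDiff_iteratedFDeriv_line (hf : ContDiff ℝ N f) {j n : ℕ}
    (hjn : ((n + j : ℕ) : WithTop ℕ∞) ≤ N) (m : Fin j → E) (p v : E) :
    ContDiff ℝ n (fun s : ℝ => iteratedFDeriv ℝ j f (p + s • v) m) :=
  (ContinuousMultilinearMap.apply ℝ (fun _ : Fin j => E) F m).contDiff.comp
    ((hf.iteratedFDeriv_right (by exact_mod_cast hjn)).comp (by fun_prop))

theorem iteratedDeriv_comp_line {k : ℕ} (hf : ContDiff ℝ N f) (hk : (k : WithTop ℕ∞) ≤ N)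
    (p v : E) (t : ℝ) :
    iteratedDeriv k (fun s : ℝ => f (p + s • v)) t
      = iteratedFDeriv ℝ k f (p + t • v) (fun _ => v) := by
  induction k generalizing t with
  | zero => simp
  | succ k ih =>
    have hk' : (k : WithTop ℕ∞) < N := lt_of_lt_of_le (by exact_mod_cast k.lt_succ_self) hk
    rw [iteratedDeriv_succ, funext fun s => ih hk'.le s, deriv_iteratedFDeriv_line hf hk']
    exact congrArg _ (Fin.cons_self_tail fun _ => v)

theorem norm_iteratedDeriv_iteratedFDeriv_line_le {j k : ℕ} {M : ℝ} (hf : ContDiff ℝ N f)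
    (hjk : ((j + k : ℕ) : WithTop ℕ∞) ≤ N) (hM : ∀ q, ‖iteratedFDeriv ℝ (j + k) f q‖ ≤ M)
    {p v : E} (hv : ‖v‖ ≤ 1) {m : Fin j → E} (hm : ∀ i, ‖m i‖ ≤ 1) (t : ℝ) :
    ‖iteratedDeriv k (fun s : ℝ => iteratedFDeriv ℝ j f (p + s • v) m) t‖ ≤ M := by
  induction k generalizing j with
  | zero =>
    simpa using (iteratedFDeriv ℝ j f (p + t • v)).le_mul_prod_of_opNorm_le_of_le (hM _) hm
  | succ k ih =>
    have hj : (j : WithTop ℕ∞) < N :=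
      lt_of_lt_of_le (by exact_mod_cast (by omega : j < j + (k + 1))) hjk
    rw [iteratedDeriv_succ', deriv_iteratedFDeriv_line hf hj]
    have hjk' : j + 1 + k = j + (k + 1) := by omega
    exact ih (by rwa [hjk']) (by rwa [hjk']) (fun i => Fin.cases hv hm i)

end Line

theorem abs_sub_taylor_le {g : ℝ → ℝ} {n : ℕ} {K : ℝ} (hg : ContDiff ℝ (n + 1) g)
    (hK : ∀ t, |iteratedDeriv (n + 1) g t| ≤ K) (c : ℝ) :
    |g c - ∑ k ∈ range (n + 1), c ^ k / k ! * iteratedDeriv k g 0|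
      ≤ K * |c| ^ (n + 1) / (n + 1)! := by
  rcases eq_or_ne c 0 with rfl | hc
  · simp [sum_range_succ']
  obtain ⟨t, -, ht⟩ := taylor_mean_remainder_lagrange_iteratedDeriv hc.symm hg.contDiffOn
  have hpoly : taylorWithinEval g n (uIcc 0 c) 0 c
      = ∑ k ∈ range (n + 1), c ^ k / k ! * iteratedDeriv k g 0 := by
    rw [taylor_within_apply]
    refine sum_congr rfl fun k hk => ?_
    rw [iteratedDerivWithin_eq_iteratedDeriv (uniqueDiffOn_uIcc hc.symm)
      (hg.contDiffAt.of_le (by exact_mod_cast (mem_range.mp hk).le)) left_mem_uIcc]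
    simp only [sub_zero, smul_eq_mul]
    ring
  rw [← hpoly, ht, abs_div, abs_mul, abs_pow, sub_zero, Nat.abs_cast]
  gcongr
  exact hK t

/-- The weights of each nonzero row of `ũ_xxxy`. -/
noncomputable def oddStencil (h : ℝ) (g : ℝ → ℝ) : ℝ :=
  -(1 / 2) * g (-(2 * h)) + g (-h) - g h + 1 / 2 * g (2 * h)

theorem abs_oddStencil_le (h : ℝ) (g : ℝ → ℝ) :
    |oddStencil h g| ≤ |g (-(2 * h))| / 2 + |g (-h)| + |g h| + |g (2 * h)| / 2 := by
  unfold oddStencil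
  rw [abs_le]
  constructor <;> linarith [le_abs_self (g (-(2 * h))), neg_abs_le (g (-(2 * h))),
    le_abs_self (g (-h)), neg_abs_le (g (-h)), le_abs_self (g h), neg_abs_le (g h),
    le_abs_self (g (2 * h)), neg_abs_le (g (2 * h))]

theorem abs_oddStencil_sub_taylor_le {g : ℝ → ℝ} {n : ℕ} {K : ℝ} (hg : ContDiff ℝ (n + 1) g)
    (hK : ∀ t, |iteratedDeriv (n + 1) g t| ≤ K) (h : ℝ) :
    |oddStencil h g
        - oddStencil h (fun c => ∑ k ∈ range (n + 1), c ^ k / k ! * iteratedDeriv k g 0)|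
      ≤ K * ((2 * |h|) ^ (n + 1) + 2 * |h| ^ (n + 1)) / (n + 1)! := by
  have hsub : ∀ ψ, oddStencil h g - oddStencil h ψ = oddStencil h (fun c => g c - ψ c) := by
    intro ψ; simp only [oddStencil]; ring
  rw [hsub]
  refine (abs_oddStencil_le h _).trans ?_
  have t₁ := abs_sub_taylor_le hg hK (-(2 * h))
  have t₂ := abs_sub_taylor_le hg hK (-h)
  have t₃ := abs_sub_taylor_le hg hK h
  have t₄ := abs_sub_taylor_le hg hK (2 * h)
  rw [abs_neg, abs_mul, abs_two] at t₁
  rw [abs_neg] at t₂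
  rw [abs_mul, abs_two] at t₄
  have hsum : K * ((2 * |h|) ^ (n + 1) + 2 * |h| ^ (n + 1)) / (n + 1)!
    = K * (2 * |h|) ^ (n + 1) / (n + 1)! / 2 + K * |h| ^ (n + 1) / (n + 1)!
      + K * |h| ^ (n + 1) / (n + 1)! + K * (2 * |h|) ^ (n + 1) / (n + 1)! / 2 := by ring
  linarith

theorem abs_oddStencil_sub_iteratedDeriv_three_le {g : ℝ → ℝ} {K : ℝ} (hg : ContDiff ℝ 5 g)
    (hK : ∀ t, |iteratedDeriv 5 g t| ≤ K) (h : ℝ) :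
    |oddStencil h g - h ^ 3 * iteratedDeriv 3 g 0| ≤ 17 / 60 * K * |h| ^ 5 := by
  have := abs_oddStencil_sub_taylor_le (n := 4) hg hK h
  simp only [oddStencil, sum_range_succ, sum_range_zero] at this ⊢
  norm_num [Nat.factorial] at this
  convert this using 1
  · congr 1; ring
  · ring

theorem abs_oddStencil_le_of_iteratedDeriv_three {g : ℝ → ℝ} {K : ℝ} (hg : ContDiff ℝ 3 g)
    (hK : ∀ t, |iteratedDeriv 3 g t| ≤ K) (h : ℝ) :
    |oddStencil h g| ≤ 5 / 3 * K * |h| ^ 3 := by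
  have := abs_oddStencil_sub_taylor_le (n := 2) hg hK h
  simp only [oddStencil, sum_range_succ, sum_range_zero] at this ⊢
  norm_num [Nat.factorial] at this
  convert this using 1
  · congr 1; ring
  · ring

theorem abs_oddStencil_le_of_deriv {g : ℝ → ℝ} {K : ℝ} (hg : ContDiff ℝ 1 g)
    (hK : ∀ t, |deriv g t| ≤ K) (h : ℝ) :
    |oddStencil h g| ≤ 4 * K * |h| := by
  have := abs_oddStencil_sub_taylor_le (n := 0) hg (by simpa using hK) h
  simp only [oddStencil, sum_range_succ, sum_range_zero] at this ⊢
  norm_num [Nat.factorial] at this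
  convert this using 1
  · congr 1; ring
  · ring

theorem abs_centeredDifference_sub_le {g : ℝ → ℝ} {K : ℝ} (hg : ContDiff ℝ 6 g)
    (hK : ∀ t, |iteratedDeriv 6 g t| ≤ K) (h : ℝ) :
    |g h - g (-h) - (2 * h * deriv g 0 + h ^ 3 / 3 * iteratedDeriv 3 g 0
      + h ^ 5 / 60 * iteratedDeriv 5 g 0)| ≤ K * h ^ 6 / 360 := by
  have hplus := abs_sub_taylor_le (n := 5) hg hK h
  have hminus := abs_sub_taylor_le (n := 5) hg hK (-h)
  simp only [sum_range_succ, sum_range_zero, abs_neg, Even.pow_abs ⟨3, rfl⟩] at hplus hminus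
  norm_num [Nat.factorial] at hplus hminus
  rw [abs_le] at hplus hminus ⊢
  constructor <;> linarith [hplus.1, hplus.2, hminus.1, hminus.2]

section Stencil

variable {E : Type*} [NormedAddCommGroup E] [NormedSpace ℝ E] {f : E → ℝ} {M : ℝ}

theorem iteratedDeriv_three_iteratedFDeriv_one_line (hf : ContDiff ℝ 6 f) (p u v : E) :
    iteratedDeriv 3 (fun s : ℝ => iteratedFDeriv ℝ 1 f (p + s • u) (fun _ => v)) 0
      = iteratedFDeriv ℝ 4 f p ![u, u, u, v] := by
  simp only [iteratedDeriv_succ', iteratedDeriv_zero]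
  rw [deriv_iteratedFDeriv_line hf (by norm_num), deriv_iteratedFDeriv_line hf (by norm_num),
    deriv_iteratedFDeriv_line hf (by norm_num)]
  beta_reduce
  rw [zero_smul, add_zero]
  congr 1
  ext i
  fin_cases i <;> rfl

theorem abs_centeredDifference_line_sub_le (hf : ContDiff ℝ 6 f)
    (hM : ∀ z, ‖iteratedFDeriv ℝ 6 f z‖ ≤ M) {v : E} (hv : ‖v‖ ≤ 1) (q : E) (h : ℝ) :
    |f (q + h • v) - f (q + (-h) • v) - (2 * h * iteratedFDeriv ℝ 1 f q (fun _ => v)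
      + h ^ 3 / 3 * iteratedFDeriv ℝ 3 f q (fun _ => v)
      + h ^ 5 / 60 * iteratedFDeriv ℝ 5 f q (fun _ => v))| ≤ M * h ^ 6 / 360 := by
  have hline : ∀ k : ℕ, k ≤ 6 → ∀ t, iteratedDeriv k (fun s : ℝ => f (q + s • v)) t
      = iteratedFDeriv ℝ k f (q + t • v) (fun _ => v) :=
    fun k hk => iteratedDeriv_comp_line hf (by exact_mod_cast hk) q v
  have key := abs_centeredDifference_sub_le (g := fun s : ℝ => f (q + s • v)) (by fun_prop)
    (K := M) (fun t => by
    rw [hline 6 le_rfl]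
    exact (iteratedFDeriv ℝ 6 f _).le_mul_prod_of_opNorm_le_of_le (hM _) (fun _ => hv) |>.trans
      (by simp)) h
  rw [← iteratedDeriv_one, hline 1 (by norm_num), hline 3 (by norm_num),
    hline 5 (by norm_num)] at key
  simpa using key

theorem abs_oddStencil_centeredDifference_sub_le (hf : ContDiff ℝ 6 f)
    (hM : ∀ z, ‖iteratedFDeriv ℝ 6 f z‖ ≤ M) {u v : E} (hu : ‖u‖ ≤ 1) (hv : ‖v‖ ≤ 1) (z : E)
    (h : ℝ) :
    |oddStencil h (fun a : ℝ => f (z + a • u + h • v) - f (z + a • u + (-h) • v))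
      - 2 * h ^ 4 * iteratedFDeriv ℝ 4 f z ![u, u, u, v]| ≤ 431 / 360 * M * h ^ 6 := by
  set T := iteratedFDeriv ℝ 4 f z ![u, u, u, v]
  set D : ℕ → ℝ → ℝ := fun k a => iteratedFDeriv ℝ k f (z + a • u) (fun _ => v)
  have hD_smooth : ∀ k n : ℕ, n + k ≤ 6 → ContDiff ℝ n (D k) := fun k n hnk =>
    contDiff_iteratedFDeriv_line hf (by exact_mod_cast hnk) _ z u
  have hD_bound : ∀ k n : ℕ, k + n = 6 → ∀ t, |iteratedDeriv n (D k) t| ≤ M := fun k n hkn t =>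
    norm_iteratedDeriv_iteratedFDeriv_line_le hf (by rw [hkn]; rfl) (hkn ▸ hM) hu (fun _ => hv) t
  set R : ℝ → ℝ := fun a : ℝ => f (z + a • u + h • v) - f (z + a • u + (-h) • v)
    - (2 * h * D 1 a + h ^ 3 / 3 * D 3 a + h ^ 5 / 60 * D 5 a)
  have hR : |oddStencil h R| ≤ M * h ^ 6 / 120 := by
    have hRa := fun a : ℝ => abs_centeredDifference_line_sub_le hf hM hv (z + a • u) h
    refine (abs_oddStencil_le h R).trans ?_
    linarith [hRa (-(2 * h)), hRa (-h), hRa h, hRa (2 * h)]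
  have h1 := abs_oddStencil_sub_iteratedDeriv_three_le (hD_smooth 1 5 (by norm_num))
    (hD_bound 1 5 rfl) h
  rw [iteratedDeriv_three_iteratedFDeriv_one_line hf] at h1
  have h3 := abs_oddStencil_le_of_iteratedDeriv_three (hD_smooth 3 3 (by norm_num))
    (hD_bound 3 3 rfl) h
  have h5 := abs_oddStencil_le_of_deriv (hD_smooth 5 1 (by norm_num))
    (by simpa using hD_bound 5 1 rfl) h
  have hsplit : oddStencil h (fun a : ℝ => f (z + a • u + h • v) - f (z + a • u + (-h) • v))
      - 2 * h ^ 4 * T = oddStencil h R + 2 * h * (oddStencil h (D 1) - h ^ 3 * T)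
        + h ^ 3 / 3 * oddStencil h (D 3) + h ^ 5 / 60 * oddStencil h (D 5) := by
    simp only [R, oddStencil]; ring
  have h6 : |h| ^ 6 = h ^ 6 := Even.pow_abs ⟨3, rfl⟩ h
  have b1 : |2 * h * (oddStencil h (D 1) - h ^ 3 * T)| ≤ 17 / 30 * M * h ^ 6 := by
    rw [abs_mul, abs_mul, abs_two, ← h6]
    calc _ ≤ 2 * |h| * (17 / 60 * M * |h| ^ 5) := by gcongr
      _ = _ := by ring
  have b3 : |h ^ 3 / 3 * oddStencil h (D 3)| ≤ 5 / 9 * M * h ^ 6 := by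
    rw [abs_mul, abs_div, abs_pow, abs_of_pos (by norm_num : (0 : ℝ) < 3), ← h6]
    calc _ ≤ |h| ^ 3 / 3 * (5 / 3 * M * |h| ^ 3) := by gcongr
      _ = _ := by ring
  have b5 : |h ^ 5 / 60 * oddStencil h (D 5)| ≤ 1 / 15 * M * h ^ 6 := by
    rw [abs_mul, abs_div, abs_pow, abs_of_pos (by norm_num : (0 : ℝ) < 60), ← h6]
    calc _ ≤ |h| ^ 5 / 60 * (4 * M * |h|) := by gcongr
      _ = _ := by ring
  rw [hsplit]
  refine (abs_add_le _ _).trans ?_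
  linarith [abs_add_three (oddStencil h R) (2 * h * (oddStencil h (D 1) - h ^ 3 * T))
    (h ^ 3 / 3 * oddStencil h (D 3))]

theorem abs_xxxyStencil_sub_le (hf : ContDiff ℝ 6 f) (hM : ∀ z, ‖iteratedFDeriv ℝ 6 f z‖ ≤ M)
    {u v : E} (hu : ‖u‖ ≤ 1) (hv : ‖v‖ ≤ 1) (z : E) {h : ℝ} (hh : h ≠ 0) :
    |1 / (2 * h ^ 4) * oddStencil h (fun a : ℝ => f (z + a • u + h • v) - f (z + a • u + (-h) • v))
      - iteratedFDeriv ℝ 4 f z ![u, u, u, v]| ≤ 3 / 5 * M * h ^ 2 := by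
  have hM0 : 0 ≤ M := (norm_nonneg _).trans (hM z)
  have hh4 : 0 < 2 * h ^ 4 := by positivity
  have key := abs_oddStencil_centeredDifference_sub_le hf hM hu hv z h
  rw [← div_le_div_iff_of_pos_right hh4, ← abs_of_pos hh4, ← abs_div, abs_of_pos hh4] at key
  refine (le_of_eq ?_).trans (key.trans ?_)
  · congr 1; field_simp
  · rw [div_le_iff₀ hh4]; nlinarith [mul_nonneg hM0 (pow_nonneg (sq_nonneg h) 3)]

end Stencil

theorem pt2_add (x y a b : ℝ) : pt2 (x + a) (y + b) = pt2 x y + a • e1 + b • e2 := by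
  ext i
  fin_cases i <;> simp [pt2, e1, e2]

/-- quadratic precision of the 5×5 stencil `ũ_xxxy`: there is an
absolute constant `C > 0` such that for every `r : ℝ² → ℝ` six times continuously
differentiable with `‖D⁶r(z)‖ ≤ M` everywhere, every `(x, y)` and every `h > 0`, the
stencil value `(1/(2h⁴))·[(−(1/2)r(x−2h,y+h) + r(x−h,y+h) − r(x+h,y+h) +
(1/2)r(x+2h,y+h)) − (−(1/2)r(x−2h,y−h) + r(x−h,y−h) − r(x+h,y−h) + (1/2)r(x+2h,y−h))]`
differs from `∂⁴r/∂x³∂y(x,y)` by at most `C·M·h²`. -/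
theorem xxxy_stencil_quadratic_precision :
    ∃ C : ℝ, 0 < C ∧
      ∀ (r : EuclideanSpace ℝ (Fin 2) → ℝ) (M : ℝ), ContDiff ℝ 6 r →
        (∀ z, ‖iteratedFDeriv ℝ 6 r z‖ ≤ M) →
        ∀ x y h : ℝ, 0 < h →
          |(1 / (2 * h ^ 4)) *
              ((-(1/2) * r (pt2 (x - 2*h) (y + h)) + r (pt2 (x - h) (y + h))
                  - r (pt2 (x + h) (y + h)) + (1/2) * r (pt2 (x + 2*h) (y + h)))
                - (-(1/2) * r (pt2 (x - 2*h) (y - h)) + r (pt2 (x - h) (y - h))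
                  - r (pt2 (x + h) (y - h)) + (1/2) * r (pt2 (x + 2*h) (y - h))))
            - iteratedFDeriv ℝ 4 r (pt2 x y) ![e1, e1, e1, e2]| ≤ C * M * h ^ 2 := by
  refine ⟨3 / 5, by norm_num, fun r M hr hM x y h hh => ?_⟩
  have hunit : ‖e1‖ ≤ 1 ∧ ‖e2‖ ≤ 1 := by simp [e1, e2]
  convert abs_xxxyStencil_sub_le hr hM hunit.1 hunit.2 (pt2 x y) hh.ne' using 4
  simp only [oddStencil, ← pt2_add, sub_eq_add_neg]
  ring_nf
end
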